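/- For each integer n ≥ 0 and parameter α, the higher-order Euler number E_n^{(α)} = 2^n E_n^{(α)}(1/2) satisfies E_n^{(α)} = Σ_{k=0}^{n} C(n,k) · Σ_{i=0}^{k} ⟨−α⟩_i · S(k,i) · 2^{k−i}. -/

import Mathlib

/-!
Substituting `t ↦ 2t`, `2ⁿ E_n^{(α)}(1/2)` is the `n`-th derivative at `0` of `A(t)^{-α} eᵗ`
with `A(t) = (e^{2t} + 1)/2`, and by Leibniz's rule it is `∑ₖ C(n,k) (A^{-α})⁽ᵏ⁾(0)`.
With `E(t) = e^{2t}/2` we have `A' = E' = 2E`, so differentiating `Eⁱ A^{p-i}` gives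
`2 (i Eⁱ A^{p-i} + (p - i) E^{i+1} A^{p-i-1})`. Together with `⟨p⟩_{i+1} = ⟨p⟩ᵢ (p - i)` this
is the recurrence `S(k+1,i) = i S(k,i) + S(k,i-1)`, whence
`(A^p)⁽ᵏ⁾ = 2ᵏ ∑ᵢ ⟨p⟩ᵢ S(k,i) Eⁱ A^{p-i}`; at `t = 0`, where `E = 1/2` and `A = 1`, this is the
inner sum.
-/

open Finset

/-- Stirling numbers of the second kind `S(n,k)`. -/
def stirling : ℕ → ℕ → ℕ
  | 0, 0 => 1
  | 0, _ + 1 => 0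
  | _ + 1, 0 => 0
  | n + 1, k + 1 => (k + 1) * stirling n (k + 1) + stirling n k

/-- The falling factorial `⟨x⟩_i = x (x-1) ⋯ (x-i+1)`, with `⟨x⟩_0 = 1`. -/
def fallingFac (x : ℝ) (i : ℕ) : ℝ := ∏ k ∈ Finset.range i, (x - k)

/-- The function `(e^t - 1)/t`, extended by the value `1` at `t = 0`. -/
noncomputable def expm1Div (t : ℝ) : ℝ := if t = 0 then 1 else (Real.exp t - 1) / t

/-- The higher-order Bernoulli polynomial `B_n^{(α)}(x)`, defined via the generating
function `(t/(eᵗ-1))^α e^{xt} = ∑ B_n^{(α)}(x) tⁿ/n!`, i.e. as the `n`-th derivative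
of `((eᵗ-1)/t)^{-α} e^{xt}` at `t = 0`. -/
noncomputable def higherBernoulli (n : ℕ) (α x : ℝ) : ℝ :=
  iteratedDeriv n (fun t => expm1Div t ^ (-α) * Real.exp (x * t)) 0

/-- The higher-order Euler polynomial `E_n^{(α)}(x)`, defined via the generating
function `(2/(eᵗ+1))^α e^{xt} = ∑ E_n^{(α)}(x) tⁿ/n!`. -/
noncomputable def higherEuler (n : ℕ) (α x : ℝ) : ℝ :=
  iteratedDeriv n (fun t => ((Real.exp t + 1) / 2) ^ (-α) * Real.exp (x * t)) 0

lemma stirling_eq_zero_of_lt : ∀ {k i : ℕ}, k < i → stirling k i = 0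
  | 0, _ + 1, _ => rfl
  | k + 1, i + 1, h => by
    simp [stirling, stirling_eq_zero_of_lt (by omega : k < i + 1),
      stirling_eq_zero_of_lt (by omega : k < i)]

lemma fallingFac_succ (x : ℝ) (i : ℕ) :
    fallingFac x (i + 1) = fallingFac x i * (x - i) :=
  prod_range_succ _ _

lemma sum_fallingFac_mul_stirling_succ (p : ℝ) (k : ℕ) (X : ℕ → ℝ) :
    ∑ i ∈ range (k + 2), fallingFac p i * stirling (k + 1) i * X i =
      ∑ i ∈ range (k + 1),
        fallingFac p i * stirling k i * (i * X i + (p - i) * X (i + 1)) := by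
  set g : ℕ → ℝ := fun i => fallingFac p i * stirling k i * (i * X i)
  have hshift : ∑ i ∈ range (k + 1), g (i + 1) = ∑ i ∈ range (k + 1), g i := by
    rw [sum_range_succ, sum_range_succ' g k]
    simp [g, stirling_eq_zero_of_lt (Nat.lt_succ_self k)]
  calc ∑ i ∈ range (k + 2), fallingFac p i * stirling (k + 1) i * X i
      = ∑ i ∈ range (k + 1),
          (g (i + 1) + fallingFac p i * stirling k i * ((p - i) * X (i + 1))) := by
        rw [sum_range_succ']
        simp only [stirling, CharP.cast_eq_zero, mul_zero, zero_mul, add_zero]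
        refine sum_congr rfl fun i _ => ?_
        simp only [g, fallingFac_succ]
        push_cast
        ring
    _ = _ := by
        rw [sum_add_distrib, hshift, ← sum_add_distrib]
        simp only [g, mul_add]

section ExpansionOfRpow

variable {E A : ℝ → ℝ} {c : ℝ}

lemma hasDerivAt_pow_mul_rpow {t : ℝ} (hE : HasDerivAt E (c * E t) t)
    (hA : HasDerivAt A (c * E t) t) (hA0 : A t ≠ 0) (i : ℕ) (q : ℝ) :
    HasDerivAt (fun s => E s ^ i * A s ^ q)
      (c * (i * (E t ^ i * A t ^ q) + q * (E t ^ (i + 1) * A t ^ (q - 1)))) t := by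
  refine ((hE.pow i).mul (hA.rpow_const (Or.inl hA0))).congr_deriv ?_
  cases i <;> simp [pow_succ] <;> ring

noncomputable def stirlingExpansion (E A : ℝ → ℝ) (c p : ℝ) (k : ℕ) (t : ℝ) : ℝ :=
  c ^ k * ∑ i ∈ range (k + 1), fallingFac p i * stirling k i * (E t ^ i * A t ^ (p - i))

lemma hasDerivAt_stirlingExpansion {t : ℝ} (hE : HasDerivAt E (c * E t) t)
    (hA : HasDerivAt A (c * E t) t) (hA0 : A t ≠ 0) (p : ℝ) (k : ℕ) :
    HasDerivAt (stirlingExpansion E A c p k) (stirlingExpansion E A c p (k + 1) t) t := by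
  have hsum := HasDerivAt.fun_sum (u := range (k + 1))
    (A := fun i s => fallingFac p i * stirling k i * (E s ^ i * A s ^ (p - i))) fun i _ =>
    (hasDerivAt_pow_mul_rpow hE hA hA0 i (p - i)).const_mul (fallingFac p i * stirling k i)
  refine (hsum.const_mul (c ^ k)).congr_deriv ?_
  rw [stirlingExpansion, sum_fallingFac_mul_stirling_succ, mul_sum, mul_sum]
  refine sum_congr rfl fun i _ => ?_
  rw [show p - i - 1 = p - ↑(i + 1) by push_cast; ring]
  ring

lemma iteratedDeriv_rpow_eq_stirlingExpansion (hE : ∀ t, HasDerivAt E (c * E t) t)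
    (hA : ∀ t, HasDerivAt A (c * E t) t) (hA0 : ∀ t, A t ≠ 0) (p : ℝ) (k : ℕ) :
    iteratedDeriv k (fun t => A t ^ p) = stirlingExpansion E A c p k := by
  induction k with
  | zero => funext t; simp [stirlingExpansion, stirling, fallingFac]
  | succ k ih =>
    funext t
    rw [iteratedDeriv_succ, ih]
    exact (hasDerivAt_stirlingExpansion (hE t) (hA t) (hA0 t) p k).deriv

end ExpansionOfRpow

lemma iteratedDeriv_mul_exp {u : ℝ → ℝ} {n : ℕ} {x : ℝ} (hu : ContDiffAt ℝ n u x) :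
    iteratedDeriv n (fun t => u t * Real.exp t) x =
      (∑ k ∈ range (n + 1), n.choose k * iteratedDeriv k u x) * Real.exp x := by
  rw [iteratedDeriv_fun_mul hu Real.contDiff_exp.contDiffAt, sum_mul]
  simp [iteratedDeriv_eq_iterate]

lemma pow_mul_higherEuler (n : ℕ) (α x c : ℝ) :
    c ^ n * higherEuler n α x =
      iteratedDeriv n (fun t => ((Real.exp (c * t) + 1) / 2) ^ (-α) * Real.exp (c * x * t)) 0 := by
  have hf : ContDiff ℝ n fun t => ((Real.exp t + 1) / 2) ^ (-α) * Real.exp (x * t) :=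
    ((by fun_prop : ContDiff ℝ n fun t => (Real.exp t + 1) / 2).rpow_const_of_ne
      fun t => by positivity).mul (by fun_prop)
  have hscale := iteratedDeriv_comp_const_mul hf c
  simp only [mul_left_comm x c, ← mul_assoc c x] at hscale
  simp only [hscale, mul_zero, higherEuler]

lemma iteratedDeriv_rpow_exp_two_mul_add_one_div_two (p : ℝ) (k : ℕ) :
    iteratedDeriv k (fun t => ((Real.exp (2 * t) + 1) / 2) ^ p) 0 =
      ∑ i ∈ range (k + 1), fallingFac p i * stirling k i * 2 ^ (k - i) := by
  have hexp (t : ℝ) : HasDerivAt (fun s => Real.exp (2 * s)) (2 * Real.exp (2 * t)) t := by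
    simpa [mul_comm] using ((hasDerivAt_id t).const_mul 2).exp
  rw [iteratedDeriv_rpow_eq_stirlingExpansion (E := fun t => Real.exp (2 * t) / 2) (c := 2)
    (fun t => (hexp t).div_const 2 |>.congr_deriv (by ring))
    (fun t => (hexp t).add_const 1 |>.div_const 2 |>.congr_deriv (by ring))
    (fun t => by positivity), stirlingExpansion, mul_sum]
  refine sum_congr rfl fun i hi => ?_
  rw [pow_sub₀ 2 two_ne_zero (Nat.lt_succ_iff.mp (mem_range.mp hi))]
  norm_num [div_pow]
  ring

theorem higherEulerNumber_closed_form (n : ℕ) (α : ℝ) :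
    2 ^ n * higherEuler n α (1 / 2) =
      ∑ k ∈ Finset.range (n + 1), (n.choose k : ℝ) *
        ∑ i ∈ Finset.range (k + 1),
          fallingFac (-α) i * (stirling k i : ℝ) * 2 ^ (k - i) := by
  have hψ : ContDiff ℝ n fun t => ((Real.exp (2 * t) + 1) / 2) ^ (-α) :=
    (by fun_prop : ContDiff ℝ n fun t => (Real.exp (2 * t) + 1) / 2).rpow_const_of_ne
      fun t => by positivity
  rw [pow_mul_higherEuler, show (2 : ℝ) * (1 / 2) = 1 by norm_num]
  simp only [one_mul]
  rw [iteratedDeriv_mul_exp hψ.contDiffAt, Real.exp_zero, mul_one]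
  simp only [iteratedDeriv_rpow_exp_two_mul_add_one_div_two]
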